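/- arXiv:1502.06132 — 4 statements merged into one kernel-verified Lean document; each statement's English description precedes it below -/
import Mathlib

section
/- Let S be a finite set with a fixpoint-free involution *, and let w : S × S → ℝ be a symmetric weight function satisfying, for all a, b, c with b ∉ {a, a*} and c ∉ {a, a*}: (i) consistency: w(a,b) + w(a,b*) = w(a,c) + w(a,c*); (ii) the cocycle identity: w(a*,b) + w(b*,c) + w(c*,a) = w(a,b*) + w(b,c*) + w(c,a*) whenever a, b, c are pairwise non-equal and pairwise non-involutive. Define σ(a,b) := w(a*,b) − w(a,b*). Then any directed graph Γ on vertex set S in which every directed edge (a,b) satisfies σ(a,b) > 0 contains no directed cycles. -/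
/-!
Extending `w` to the diagonal makes `σ` a coboundary: `σ(a,b) = w(b,b) - w(a,a)`.
Hence `a ↦ w(a,a)` strictly increases along every edge of `Γ`, which rules out
directed cycles.
-/

theorem sub_eq_diag_sub_diag {S : Type*} {s : S → S} (hinv : ∀ a : S, s (s a) = a)
    {w : S → S → ℝ} (hsym : ∀ a b : S, w a b = w b a)
    (hdiag : ∀ a b : S, b ≠ a → b ≠ s a → w a a = w a b + w a (s b)) (a b : S) :
    w (s a) b - w a (s b) = w b b - w a a := by
  by_cases hba : b = a
  · subst hba
    rw [hsym (s b) b]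
    ring
  by_cases hbsa : b = s a
  · subst hbsa
    rw [hinv a]
  have hab : a ≠ b := Ne.symm hba
  have hasb : a ≠ s b := fun h => hbsa (by rw [h, hinv])
  rw [hdiag a b hba hbsa, hdiag b a hab hasb, hsym b (s a), hsym b a]
  ring

theorem lt_of_chain {S α : Type*} [Preorder α] {Γ : S → S → Prop} {φ : S → α}
    (hφ : ∀ a b, Γ a b → φ a < φ b) {f : ℕ → S} {m : ℕ} (hm : 1 ≤ m)
    (hf : ∀ i < m, Γ (f i) (f (i + 1))) : φ (f 0) < φ (f m) := by
  induction m, hm using Nat.le_induction with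
  | base => exact hφ _ _ (hf 0 Nat.one_pos)
  | succ n hn ih =>
    exact (ih fun i hi => hf i (by omega)).trans (hφ _ _ (hf n n.lt_succ_self))

theorem acyclicity_lemma_general {S : Type*}
    (s : S → S)
    (hinv : ∀ a : S, s (s a) = a)
    (w : S → S → ℝ)
    (hsym : ∀ a b : S, w a b = w b a)
    (hdiag : ∀ a b : S, b ≠ a → b ≠ s a → w a a = w a b + w a (s b))
    (Γ : S → S → Prop)
    (hΓ : ∀ a b : S, Γ a b → 0 < w (s a) b - w a (s b)) :
    ¬ ∃ (m : ℕ) (f : ℕ → S), 1 ≤ m ∧ f m = f 0 ∧ ∀ i < m, Γ (f i) (f (i + 1)) := by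
  rintro ⟨m, f, hm, hcycle, hf⟩
  have hincr : ∀ a b, Γ a b → w a a < w b b := fun a b hab => by
    have := hΓ a b hab
    rw [sub_eq_diag_sub_diag hinv hsym hdiag] at this
    linarith
  have hlt := lt_of_chain (φ := fun a => w a a) hincr hm hf
  rw [hcycle] at hlt
  exact lt_irrefl _ hlt

/-- Acyclicity Lemma: given a symmetric weight function on a finite set with
fixpoint-free involution, satisfying the consistency and cocycle constraints
(together with the canonical extension to non-proper pairs), any directed graph
whose every edge `(a,b)` has positive orientation cocycle
`σ(a,b) = w(a*,b) − w(a,b*)` contains no directed cycles. -/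
theorem acyclicity_lemma {S : Type*} [Fintype S]
    (s : S → S)
    (hinv : ∀ a : S, s (s a) = a)
    (hnf : ∀ a : S, s a ≠ a)
    (w : S → S → ℝ)
    (hsym : ∀ a b : S, w a b = w b a)
    (hcons : ∀ a b c : S, b ≠ a → b ≠ s a → c ≠ a → c ≠ s a →
      w a b + w a (s b) = w a c + w a (s c))
    (hcoc : ∀ a b c : S, b ≠ a → b ≠ s a → c ≠ a → c ≠ s a → c ≠ b → c ≠ s b →
      w (s a) b + w (s b) c + w (s c) a = w a (s b) + w b (s c) + w c (s a))
    (hdiag : ∀ a b : S, b ≠ a → b ≠ s a → w a a = w a b + w a (s b))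
    (hstar : ∀ a : S, w a (s a) = 0)
    (Γ : S → S → Prop)
    (hΓ : ∀ a b : S, Γ a b → 0 < w (s a) b - w a (s b)) :
    ¬ ∃ (m : ℕ) (f : ℕ → S), 1 ≤ m ∧ f m = f 0 ∧ ∀ i < m, Γ (f i) (f (i + 1)) :=
  acyclicity_lemma_general s hinv w hsym hdiag Γ hΓ
end

section
/- Let S be a finite set with fixpoint-free involution * and let w be a symmetric weight function as in the acyclicity setting (satisfying consistency and the cocycle identity). Then the extended orientation cocycle σ(a,b) := w(a*,b) − w(a,b*) is additive: σ(a,b) + σ(b,c) = σ(a,c) for all a, b, c ∈ S. -/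
/-!
For a triple with no two entries equal or paired by `*`, additivity of `σ` is the cocycle
identity rearranged using the symmetry of `w`. A triple with two equal entries is handled by
antisymmetry of `σ`, and every triple containing a pair `{x, x*}` reduces, again by
antisymmetry, to `σ(a,b) + σ(b,a*) = σ(a,a*)`, which is the diagonal extension
`w(x,x) = w(x,b) + w(x,b*)` taken at `x = a` and at `x = a*`.
-/

def orientationCocycle {S : Type*} (s : S → S) (w : S → S → ℝ) (a b : S) : ℝ :=
  w (s a) b - w a (s b)

section OrientationCocycle

variable {S : Type*} {s : S → S} {w : S → S → ℝ}

theorem orientationCocycle_swap (hsym : ∀ a b : S, w a b = w b a) (a b : S) :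
    orientationCocycle s w b a = -orientationCocycle s w a b := by
  simp only [orientationCocycle, hsym (s b) a, hsym b (s a)]
  ring

theorem orientationCocycle_self (hsym : ∀ a b : S, w a b = w b a) (a : S) :
    orientationCocycle s w a a = 0 := by
  rw [orientationCocycle, hsym (s a) a, sub_self]

theorem orientationCocycle_add_star (hinv : ∀ a : S, s (s a) = a)
    (hsym : ∀ a b : S, w a b = w b a)
    (hdiag : ∀ a b : S, b ≠ a → b ≠ s a → w a a = w a b + w a (s b))
    {a b : S} (hba : b ≠ a) (hbsa : b ≠ s a) :
    orientationCocycle s w a b + orientationCocycle s w b (s a) =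
      orientationCocycle s w a (s a) := by
  have hdiag_a := hdiag a b hba hbsa
  have hdiag_sa := hdiag (s a) b hbsa (by rwa [hinv])
  simp only [orientationCocycle, hinv] at hdiag_sa ⊢
  linarith [hsym (s b) (s a), hsym b a]

theorem orientationCocycle_add_of_ne (hsym : ∀ a b : S, w a b = w b a)
    (hcoc : ∀ a b c : S, b ≠ a → b ≠ s a → c ≠ a → c ≠ s a → c ≠ b → c ≠ s b →
      w (s a) b + w (s b) c + w (s c) a = w a (s b) + w b (s c) + w c (s a))
    {a b c : S} (hba : b ≠ a) (hbsa : b ≠ s a) (hca : c ≠ a) (hcsa : c ≠ s a)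
    (hcb : c ≠ b) (hcsb : c ≠ s b) :
    orientationCocycle s w a b + orientationCocycle s w b c = orientationCocycle s w a c := by
  have hcocycle := hcoc a b c hba hbsa hca hcsa hcb hcsb
  simp only [orientationCocycle]
  linarith [hsym c (s a), hsym (s c) a]

end OrientationCocycle

theorem orientation_cocycle_additive_general {S : Type*}
    (s : S → S)
    (hinv : ∀ a : S, s (s a) = a)
    (w : S → S → ℝ)
    (hsym : ∀ a b : S, w a b = w b a)
    (hcoc : ∀ a b c : S, b ≠ a → b ≠ s a → c ≠ a → c ≠ s a → c ≠ b → c ≠ s b →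
      w (s a) b + w (s b) c + w (s c) a = w a (s b) + w b (s c) + w c (s a))
    (hdiag : ∀ a b : S, b ≠ a → b ≠ s a → w a a = w a b + w a (s b)) :
    ∀ a b c : S,
      (w (s a) b - w a (s b)) + (w (s b) c - w b (s c)) = w (s a) c - w a (s c) := by
  intro a b c
  change orientationCocycle s w a b + orientationCocycle s w b c = orientationCocycle s w a c
  have hswap := orientationCocycle_swap (s := s) hsym
  by_cases hba : b = a
  · rw [hba, orientationCocycle_self hsym, zero_add]
  by_cases hcb : c = b
  · rw [hcb, orientationCocycle_self hsym, add_zero]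
  by_cases hca : c = a
  · rw [hca, orientationCocycle_self hsym, hswap b a, neg_add_cancel]
  by_cases hbsa : b = s a
  · subst hbsa
    linarith [orientationCocycle_add_star hinv hsym hdiag hca hcb, hswap c (s a)]
  by_cases hcsb : c = s b
  · subst hcsb
    have hasb : a ≠ s b := fun h => hbsa (by rw [h, hinv])
    linarith [orientationCocycle_add_star hinv hsym hdiag (Ne.symm hba) hasb, hswap a b]
  by_cases hcsa : c = s a
  · subst hcsa
    exact orientationCocycle_add_star hinv hsym hdiag hba hbsa
  exact orientationCocycle_add_of_ne hsym hcoc hba hbsa hca hcsa hcb hcsb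

/-- The extended orientation cocycle `σ(a,b) = w(a*,b) − w(a,b*)` is additive:
`σ(a,b) + σ(b,c) = σ(a,c)` for all `a, b, c`. -/
theorem orientation_cocycle_additive {S : Type*} [Fintype S]
    (s : S → S)
    (hinv : ∀ a : S, s (s a) = a)
    (hnf : ∀ a : S, s a ≠ a)
    (w : S → S → ℝ)
    (hsym : ∀ a b : S, w a b = w b a)
    (hcons : ∀ a b c : S, b ≠ a → b ≠ s a → c ≠ a → c ≠ s a →
      w a b + w a (s b) = w a c + w a (s c))
    (hcoc : ∀ a b c : S, b ≠ a → b ≠ s a → c ≠ a → c ≠ s a → c ≠ b → c ≠ s b →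
      w (s a) b + w (s b) c + w (s c) a = w a (s b) + w b (s c) + w c (s a))
    (hdiag : ∀ a b : S, b ≠ a → b ≠ s a → w a a = w a b + w a (s b))
    (hstar : ∀ a : S, w a (s a) = 0) :
    ∀ a b c : S,
      (w (s a) b - w a (s b)) + (w (s b) c - w b (s c)) = w (s a) c - w a (s c) :=
  orientation_cocycle_additive_general s hinv w hsym hcoc hdiag
end

section
/- Let P be a finite weak poc set with dual vertex set P°, and let T ⊆ P be coherent. Then for every u ∈ P°, the set proj_K(u) := (u \ down(T*)) ∪ up(T) is a coherent complete *-selection, it contains T (i.e., lies in K := {v ∈ P° : T ⊆ v}), and it equals (u ∪ up(T)) \ down(T*). -/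
def up {P : Type*} [PartialOrder P] (A : Set P) : Set P := {p | ∃ a ∈ A, a ≤ p}

def down {P : Type*} [PartialOrder P] (A : Set P) : Set P := {q | ∃ a ∈ A, q ≤ a}

def Coherent {P : Type*} [PartialOrder P] (s : P → P) (S : Set P) : Prop :=
  ∀ b ∈ S, ∀ c ∈ S, ¬ b ≤ s c

def coh {P : Type*} [PartialOrder P] (s : P → P) (A : Set P) : Set P :=
  up A \ down (s '' A)

/-- A complete *-selection: contains exactly one of each pair `{a, a*}`. -/
def CompleteSel {P : Type*} (s : P → P) (A : Set P) : Prop :=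
  ∀ a : P, a ∈ A ↔ s a ∉ A

/-- The vertex set of the dual cubing: coherent complete *-selections. -/
def PocDual {P : Type*} [PartialOrder P] (s : P → P) : Set (Set P) :=
  {u | CompleteSel s u ∧ Coherent s u}

/-!
Since `*` is an order-reversing involution, it exchanges `up T` and `down T*`, and coherence of
`T` makes these two sets disjoint. So on each pair `{a, a*}` meeting `up T` the projection picks
the member in `up T`, and elsewhere it agrees with `u`; this keeps it a complete selection.
It stays coherent because anything below the `*` of an element of `up T` lies in `down T*`,
which has been removed from `u`.
-/

section Projection

variable {P : Type*} [PartialOrder P] {s : P → P} {T : Set P}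

theorem le_apply_comm (hinv : Function.Involutive s) (hrev : Antitone s) {a b : P} :
    a ≤ s b ↔ b ≤ s a :=
  ⟨fun h => hinv b ▸ hrev h, fun h => hinv a ▸ hrev h⟩

theorem mem_down_image_iff (hinv : Function.Involutive s) (hrev : Antitone s) {a : P} :
    a ∈ down (s '' T) ↔ s a ∈ up T := by
  simp only [down, up, Set.mem_ofPred_eq, Set.exists_mem_image, le_apply_comm hinv hrev]

theorem mem_down_image_of_le_of_mem_up (hrev : Antitone s) {b c : P} (hc : c ∈ up T)
    (hle : b ≤ s c) : b ∈ down (s '' T) := by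
  obtain ⟨t, ht, htc⟩ := hc
  exact ⟨s t, Set.mem_image_of_mem s ht, hle.trans (hrev htc)⟩

theorem Coherent.not_mem_down_image_of_mem_up (hT : Coherent s T) {a : P} (ha : a ∈ up T) :
    a ∉ down (s '' T) := by
  rintro ⟨_, ⟨t', ht', rfl⟩, hle⟩
  obtain ⟨t, ht, hta⟩ := ha
  exact hT t ht t' ht' (hta.trans hle)

theorem Coherent.apply_not_mem_up_of_mem_up (hinv : Function.Involutive s) (hrev : Antitone s)
    (hT : Coherent s T) {a : P} (ha : a ∈ up T) : s a ∉ up T :=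
  (mem_down_image_iff hinv hrev).not.1 (hT.not_mem_down_image_of_mem_up ha)

def proj (s : P → P) (T u : Set P) : Set P :=
  (u \ down (s '' T)) ∪ up T

theorem subset_proj (u : Set P) : T ⊆ proj s T u :=
  fun t ht => Or.inr ⟨t, ht, le_rfl⟩

theorem Coherent.proj_eq (hT : Coherent s T) (u : Set P) :
    proj s T u = (u ∪ up T) \ down (s '' T) := by
  have hdisj : Disjoint (up T) (down (s '' T)) :=
    Set.disjoint_left.2 fun _ => hT.not_mem_down_image_of_mem_up
  rw [proj, Set.union_sdiff_distrib, hdisj.sdiff_eq_left]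

theorem CompleteSel.proj (hinv : Function.Involutive s) (hrev : Antitone s)
    (hT : Coherent s T) {u : Set P} (hu : CompleteSel s u) : CompleteSel s (proj s T u) := by
  intro a
  simp only [_root_.proj, Set.mem_union, Set.mem_sdiff, mem_down_image_iff hinv hrev, hinv a]
  by_cases ha : a ∈ up T
  · simp [ha, hT.apply_not_mem_up_of_mem_up hinv hrev ha]
  by_cases hsa : s a ∈ up T
  · simp [hsa, hinv a ▸ hT.apply_not_mem_up_of_mem_up hinv hrev hsa]
  · simp [ha, hsa, hu a]

theorem Coherent.proj (hinv : Function.Involutive s) (hrev : Antitone s)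
    (hT : Coherent s T) {u : Set P} (hu : Coherent s u) : Coherent s (proj s T u) := by
  rintro b (⟨hbu, hbD⟩ | hbU) c (⟨hcu, hcD⟩ | hcU) hle
  · exact hu b hbu c hcu hle
  · exact hbD (mem_down_image_of_le_of_mem_up hrev hcU hle)
  · exact hcD (mem_down_image_of_le_of_mem_up hrev hbU ((le_apply_comm hinv hrev).1 hle))
  · exact hT.not_mem_down_image_of_mem_up hbU (mem_down_image_of_le_of_mem_up hrev hcU hle)

end Projection

theorem projection_of_point_general {P : Type*} [PartialOrder P]
    (s : P → P)
    (hinv : ∀ a : P, s (s a) = a)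
    (hrev : ∀ a b : P, a ≤ b → s b ≤ s a)
    (T : Set P) (hT : Coherent s T)
    (u : Set P) (hu : u ∈ PocDual s) :
    ((u \ down (s '' T)) ∪ up T) ∈ PocDual s ∧
    T ⊆ (u \ down (s '' T)) ∪ up T ∧
    (u \ down (s '' T)) ∪ up T = (u ∪ up T) \ down (s '' T) := by
  have hanti : Antitone s := fun a b => hrev a b
  exact ⟨⟨hu.1.proj hinv hanti hT, hT.proj hinv hanti hu.2⟩, subset_proj u, hT.proj_eq u⟩

/-- Projection of a point to the convex set of vertices containing a coherent T:
the set (u \ down(T*)) ∪ up(T) is a dual vertex containing T and it equals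
(u ∪ up(T)) \ down(T*). -/
theorem projection_of_point {P : Type*} [PartialOrder P] [Fintype P] [OrderBot P]
    (s : P → P)
    (hinv : ∀ a : P, s (s a) = a)
    (hnf : ∀ a : P, s a ≠ a)
    (hrev : ∀ a b : P, a ≤ b → s b ≤ s a)
    (T : Set P) (hT : Coherent s T)
    (u : Set P) (hu : u ∈ PocDual s) :
    ((u \ down (s '' T)) ∪ up T) ∈ PocDual s ∧
    T ⊆ (u \ down (s '' T)) ∪ up T ∧
    (u \ down (s '' T)) ∪ up T = (u ∪ up T) \ down (s '' T) :=
  projection_of_point_general s hinv hrev T hT u hu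
end

section
/- Let P and Q be finite weak poc sets and let P ∨ Q be their direct sum. Then the dual cubical complex of P ∨ Q is isomorphic to the Cartesian product of the duals: at the level of vertex sets, the map sending a coherent complete *-selection A on P ∨ Q to the pair (A ∩ P, A ∩ Q) is a bijection from (P ∨ Q)° onto P° × Q°, and it preserves medians. -/
/-- A relative complete *-selection on a *-closed subset Q of P. -/
def RelSel {P : Type*} [PartialOrder P] (s : P → P) (Q : Set P) : Set (Set P) :=
  {u | u ⊆ Q ∧ (∀ a ∈ Q, (a ∈ u ↔ s a ∉ u)) ∧ Coherent s u}

/-!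
On `P ∩ Q = {⊥, ⊥*}` every coherent selection contains `⊥*` and omits `⊥`, so selections on `P`
and on `Q` always agree on their overlap and `A ↦ (A ∩ P, A ∩ Q)` has inverse `(u, v) ↦ u ∪ v`.
The union stays coherent: a relation `b ≤ c*` with `b ∈ u`, `c ∈ v` either lives inside one
summand, or relates `P \ Q` to `Q \ P`, which the direct sum forbids. Medians commute with
intersecting by `P`, so they are computed coordinatewise.
-/

open Set

theorem median_inter {α : Type*} (u v w P : Set α) :
    ((u ∩ v) ∪ (u ∩ w) ∪ (v ∩ w)) ∩ P =
      ((u ∩ P) ∩ (v ∩ P)) ∪ ((u ∩ P) ∩ (w ∩ P)) ∪ ((v ∩ P) ∩ (w ∩ P)) := by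
  rw [union_inter_distrib_right, union_inter_distrib_right, inter_inter_distrib_right u v,
    inter_inter_distrib_right u w, inter_inter_distrib_right v w]

theorem injective_inter_prod {α : Type*} {P Q : Set α} (hcover : P ∪ Q = univ) :
    Function.Injective fun A : Set α => (A ∩ P, A ∩ Q) := by
  have hsplit : ∀ A : Set α, A ∩ P ∪ A ∩ Q = A := fun A => by
    rw [← inter_union_distrib_left, hcover, inter_univ]
  intro A B hAB
  obtain ⟨hP, hQ⟩ := Prod.mk.inj hAB
  rw [← hsplit A, ← hsplit B, hP, hQ]

section Selections

variable {R : Type*} [PartialOrder R] {s : R → R}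

theorem Coherent.mono {u v : Set R} (hu : Coherent s u) (hvu : v ⊆ u) : Coherent s v :=
  fun b hb c hc => hu b (hvu hb) c (hvu hc)

theorem Coherent.union {u v : Set R} (hu : Coherent s u) (hv : Coherent s v)
    (huv : ∀ b ∈ u, ∀ c ∈ v, ¬ b ≤ s c) (hvu : ∀ b ∈ v, ∀ c ∈ u, ¬ b ≤ s c) :
    Coherent s (u ∪ v) := by
  rintro b (hb | hb) c (hc | hc)
  exacts [hu b hb c hc, huv b hb c hc, hvu b hb c hc, hv b hb c hc]

theorem Coherent.bot_notMem [OrderBot R] {u : Set R} (hu : Coherent s u) : ⊥ ∉ u :=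
  fun hb => hu ⊥ hb ⊥ hb bot_le

theorem inter_mem_relSel {A P : Set R} (hA : A ∈ PocDual s) (hPs : MapsTo s P P) :
    A ∩ P ∈ RelSel s P := by
  refine ⟨inter_subset_right, fun a ha => ?_, hA.2.mono inter_subset_left⟩
  simpa only [mem_inter_iff, ha, hPs ha, and_true] using hA.1 a

theorem inter_bot_pair_of_mem_relSel [OrderBot R] {Q v : Set R} (hv : v ∈ RelSel s Q) (hQ : ⊥ ∈ Q) :
    v ∩ {⊥, s ⊥} = {s ⊥} := by
  have hbot : ⊥ ∉ v := hv.2.2.bot_notMem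
  have hsbot : s ⊥ ∈ v := by_contra fun h => hbot ((hv.2.1 ⊥ hQ).2 h)
  ext x
  constructor
  · rintro ⟨hx, rfl | rfl⟩
    exacts [absurd hx hbot, rfl]
  · rintro rfl
    exact ⟨hsbot, Or.inr rfl⟩

end Selections

structure IsDirectSum {R : Type*} [PartialOrder R] [OrderBot R] (s : R → R) (P Q : Set R) :
    Prop where
  involutive : Function.Involutive s
  mapsTo_left : MapsTo s P P
  mapsTo_right : MapsTo s Q Q
  union_eq : P ∪ Q = univ
  inter_eq : P ∩ Q = {⊥, s ⊥}
  incomparable : ∀ a ∈ P \ Q, ∀ b ∈ Q \ P, ¬ a ≤ b ∧ ¬ b ≤ a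

namespace IsDirectSum

variable {R : Type*} [PartialOrder R] [OrderBot R] {s : R → R} {P Q u v : Set R}

theorem symm (h : IsDirectSum s P Q) : IsDirectSum s Q P where
  involutive := h.involutive
  mapsTo_left := h.mapsTo_right
  mapsTo_right := h.mapsTo_left
  union_eq := by rw [union_comm, h.union_eq]
  inter_eq := by rw [inter_comm, h.inter_eq]
  incomparable a ha b hb := (h.incomparable b hb a ha).symm

theorem apply_mem_left_iff (h : IsDirectSum s P Q) {a : R} : s a ∈ P ↔ a ∈ P :=
  ⟨fun ha => h.involutive a ▸ h.mapsTo_left ha, fun ha => h.mapsTo_left ha⟩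

theorem inter_right_subset (h : IsDirectSum s P Q) (hu : u ∈ RelSel s P) (hv : v ∈ RelSel s Q) :
    u ∩ Q ⊆ v := by
  have hbot : (⊥ : R) ∈ P ∩ Q := h.inter_eq ▸ Or.inl rfl
  calc u ∩ Q = u ∩ {⊥, s ⊥} := by rw [← h.inter_eq, ← inter_assoc, inter_eq_left.2 hu.1]
    _ = v ∩ {⊥, s ⊥} := by rw [inter_bot_pair_of_mem_relSel hu hbot.1, inter_bot_pair_of_mem_relSel hv hbot.2]
    _ ⊆ v := inter_subset_left

theorem union_inter_left (h : IsDirectSum s P Q) (hu : u ∈ RelSel s P) (hv : v ∈ RelSel s Q) :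
    (u ∪ v) ∩ P = u := by
  rw [union_inter_distrib_right, inter_eq_left.2 hu.1]
  exact union_eq_left.2 (h.symm.inter_right_subset hv hu)

theorem union_inter_right (h : IsDirectSum s P Q) (hu : u ∈ RelSel s P) (hv : v ∈ RelSel s Q) :
    (u ∪ v) ∩ Q = v := by
  rw [union_comm, h.symm.union_inter_left hv hu]

theorem not_le_apply (h : IsDirectSum s P Q) (hu : u ∈ RelSel s P) (hv : v ∈ RelSel s Q)
    {b c : R} (hb : b ∈ u) (hc : c ∈ v) : ¬ b ≤ s c := by
  by_cases hbQ : b ∈ Q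
  · exact hv.2.2 b (h.inter_right_subset hu hv ⟨hb, hbQ⟩) c hc
  by_cases hcP : c ∈ P
  · exact hu.2.2 b hb c (h.symm.inter_right_subset hv hu ⟨hc, hcP⟩)
  exact (h.incomparable b ⟨hu.1 hb, hbQ⟩ (s c)
    ⟨h.mapsTo_right (hv.1 hc), mt h.apply_mem_left_iff.1 hcP⟩).1

theorem completeSel (h : IsDirectSum s P Q) {A : Set R} (hAP : A ∩ P ∈ RelSel s P)
    (hAQ : A ∩ Q ∈ RelSel s Q) : CompleteSel s A := by
  intro a
  rcases (h.union_eq ▸ mem_univ a : a ∈ P ∪ Q) with ha | ha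
  · simpa only [mem_inter_iff, ha, h.mapsTo_left ha, and_true] using hAP.2.1 a ha
  · simpa only [mem_inter_iff, ha, h.mapsTo_right ha, and_true] using hAQ.2.1 a ha

theorem union_mem_pocDual (h : IsDirectSum s P Q) (hu : u ∈ RelSel s P) (hv : v ∈ RelSel s Q) :
    u ∪ v ∈ PocDual s := by
  refine ⟨h.completeSel ?_ ?_, hu.2.2.union hv.2.2 (fun b hb c hc => h.not_le_apply hu hv hb hc)
    (fun b hb c hc => h.symm.not_le_apply hv hu hb hc)⟩
  · rwa [h.union_inter_left hu hv]
  · rwa [h.union_inter_right hu hv]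

theorem bijOn_inter_prod (h : IsDirectSum s P Q) :
    BijOn (fun A : Set R => (A ∩ P, A ∩ Q)) (PocDual s) (RelSel s P ×ˢ RelSel s Q) := by
  refine ⟨fun A hA => ⟨inter_mem_relSel hA h.mapsTo_left, inter_mem_relSel hA h.mapsTo_right⟩,
    (injective_inter_prod h.union_eq).injOn, ?_⟩
  rintro ⟨u, v⟩ ⟨hu, hv⟩
  exact ⟨u ∪ v, h.union_mem_pocDual hu hv,
    Prod.ext (h.union_inter_left hu hv) (h.union_inter_right hu hv)⟩

end IsDirectSum

theorem direct_sum_dual_general {R : Type*} [PartialOrder R] [OrderBot R]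
    (s : R → R)
    (hinv : ∀ a : R, s (s a) = a)
    (P Q : Set R)
    (hPs : ∀ a ∈ P, s a ∈ P) (hQs : ∀ a ∈ Q, s a ∈ Q)
    (hcover : P ∪ Q = Set.univ)
    (hmeet : P ∩ Q = {⊥, s ⊥})
    (hnorel : ∀ a ∈ P, ∀ b ∈ Q, a ∉ Q → b ∉ P → ¬ a ≤ b ∧ ¬ b ≤ a) :
    Set.BijOn (fun A : Set R => (A ∩ P, A ∩ Q)) (PocDual s)
      (RelSel s P ×ˢ RelSel s Q) ∧
    (∀ u ∈ PocDual s, ∀ v ∈ PocDual s, ∀ w ∈ PocDual s,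
      (fun A : Set R => (A ∩ P, A ∩ Q)) ((u ∩ v) ∪ (u ∩ w) ∪ (v ∩ w)) =
        (((u ∩ P) ∩ (v ∩ P)) ∪ ((u ∩ P) ∩ (w ∩ P)) ∪ ((v ∩ P) ∩ (w ∩ P)),
         ((u ∩ Q) ∩ (v ∩ Q)) ∪ ((u ∩ Q) ∩ (w ∩ Q)) ∪ ((v ∩ Q) ∩ (w ∩ Q)))) := by
  have h : IsDirectSum s P Q :=
    { involutive := hinv
      mapsTo_left := fun a ha => hPs a ha
      mapsTo_right := fun a ha => hQs a ha
      union_eq := hcover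
      inter_eq := hmeet
      incomparable := fun a ha b hb => hnorel a ha.1 b hb.1 ha.2 hb.2 }
  exact ⟨h.bijOn_inter_prod,
    fun u _ v _ w _ => Prod.ext (median_inter u v w P) (median_inter u v w Q)⟩

/-- Direct sum: if the weak poc set R decomposes as R = P ∨ Q (the two poc
subsets P, Q are *-closed, cover R, meet exactly in {⊥, ⊥*}, and carry no order
relations between their proper parts), then A ↦ (A ∩ P, A ∩ Q) is a bijection
from the dual of R onto the product of the duals of P and Q, preserving medians
(which are computed coordinatewise on the product). -/
theorem direct_sum_dual {R : Type*} [PartialOrder R] [Fintype R] [OrderBot R]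
    (s : R → R)
    (hinv : ∀ a : R, s (s a) = a)
    (hnf : ∀ a : R, s a ≠ a)
    (hrev : ∀ a b : R, a ≤ b → s b ≤ s a)
    (P Q : Set R)
    (hPs : ∀ a ∈ P, s a ∈ P) (hQs : ∀ a ∈ Q, s a ∈ Q)
    (hPbot : (⊥ : R) ∈ P) (hQbot : (⊥ : R) ∈ Q)
    (hcover : P ∪ Q = Set.univ)
    (hmeet : P ∩ Q = {⊥, s ⊥})
    (hnorel : ∀ a ∈ P, ∀ b ∈ Q, a ∉ Q → b ∉ P → ¬ a ≤ b ∧ ¬ b ≤ a) :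
    Set.BijOn (fun A : Set R => (A ∩ P, A ∩ Q)) (PocDual s)
      (RelSel s P ×ˢ RelSel s Q) ∧
    (∀ u ∈ PocDual s, ∀ v ∈ PocDual s, ∀ w ∈ PocDual s,
      (fun A : Set R => (A ∩ P, A ∩ Q)) ((u ∩ v) ∪ (u ∩ w) ∪ (v ∩ w)) =
        (((u ∩ P) ∩ (v ∩ P)) ∪ ((u ∩ P) ∩ (w ∩ P)) ∪ ((v ∩ P) ∩ (w ∩ P)),
         ((u ∩ Q) ∩ (v ∩ Q)) ∪ ((u ∩ Q) ∩ (w ∩ Q)) ∪ ((v ∩ Q) ∩ (w ∩ Q)))) :=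
  direct_sum_dual_general s hinv P Q hPs hQs hcover hmeet hnorel
end
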